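/- arXiv:1712.04653 — 2 statements merged into one kernel-verified Lean document; each statement's English description precedes it below -/
import Mathlib

section
/- Let f be the uniform limit of the sequence (f_k) and let g = f + 2/3. Then for every k ∈ ℕ, A_{k+1} = f(A_k) ∪ g(A_k), where A_k = ⋃ 𝓘_k. -/
/-!
Every `f_k` is monotone on `[0, 1]`: `f_{k+1}` agrees with `f_k` off `A_{k+1}`, and on each
`[a, b] ∈ 𝓘_{k+1}` it is a nondecreasing three-piece affine map with the values of `f_k` at `a` and
`b`. Hence `f` is monotone. The value of `f_n` at an endpoint of an interval of `𝓘_{k+1}` is the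
same for all `n ≥ k`, and on the gap `(m₁, m₂)` of `[a, b]`, which misses all later `A_n`,
`f = f_{k+1}`. This gives `f b - f a = w_{k+2}` and shows that `[f a, f m₁]` and `[f m₂, f b]` are
the two children of `[f a, f b]`; by induction, `𝓘_{k+2}` consists of the images of the intervals
of `𝓘_{k+1}` under `f` and `g`. Finally `f` maps `[a, b]` onto `[f a, f b]`: refining into
children, or hitting a value exactly on a gap, approximates every value within `w_n → 0`, and a
monotone function with dense image on an interval is onto.
-/

open Set Filter Topology

theorem eq_of_tendsto_of_succ_eq {α : Type*} [TopologicalSpace α] [T2Space α] {u : ℕ → α}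
    {a : α} {m : ℕ} (hu : Tendsto u atTop (𝓝 a)) (h : ∀ n ≥ m, u (n + 1) = u n) : a = u m := by
  refine tendsto_nhds_unique hu (tendsto_atTop_of_eventually_const (i₀ := m) fun n hn => ?_)
  induction n, hn using Nat.le_induction with
  | base => rfl
  | succ n hn ih => rw [h n hn, ih]

theorem monotoneOn_of_eq_affine {f : ℝ → ℝ} {s : Set ℝ} {c d e : ℝ} (hc : 0 ≤ c)
    (hf : ∀ x ∈ s, f x = c * (x - d) + e) : MonotoneOn f s := by
  intro x hx y hy hxy
  rw [hf x hx, hf y hy]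
  gcongr

theorem MonotoneOn.of_eqOn_diff_biUnion_Icc {α β : Type*} [LinearOrder α] [Preorder β]
    {g h : α → β} {s : Set α} {P : Set (α × α)} (hg : MonotoneOn g s)
    (hPs : ∀ p ∈ P, p.1 ∈ s ∧ p.2 ∈ s)
    (hsep : ∀ p ∈ P, ∀ q ∈ P, p ≠ q → p.2 < q.1 ∨ q.2 < p.1)
    (hout : ∀ x ∈ s \ ⋃ p ∈ P, Icc p.1 p.2, h x = g x)
    (hmono : ∀ p ∈ P, MonotoneOn h (Icc p.1 p.2))
    (hends : ∀ p ∈ P, h p.1 = g p.1 ∧ h p.2 = g p.2) : MonotoneOn h s := by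
  have hbounds : ∀ p ∈ P, ∀ x ∈ Icc p.1 p.2, g p.1 ≤ h x ∧ h x ≤ g p.2 := by
    intro p hp x hx
    have hp12 : p.1 ≤ p.2 := hx.1.trans hx.2
    rw [← (hends p hp).1, ← (hends p hp).2]
    exact ⟨hmono p hp ⟨le_rfl, hp12⟩ hx hx.1, hmono p hp hx ⟨hp12, le_rfl⟩ hx.2⟩
  have hout' : ∀ x ∈ s, (¬∃ p ∈ P, x ∈ Icc p.1 p.2) → h x = g x := fun x hx hxP =>
    hout x ⟨hx, by simpa only [mem_iUnion₂, exists_prop] using hxP⟩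
  intro x hx y hy hxy
  by_cases hxP : ∃ p ∈ P, x ∈ Icc p.1 p.2 <;> by_cases hyP : ∃ q ∈ P, y ∈ Icc q.1 q.2
  · obtain ⟨p, hp, hxp⟩ := hxP
    obtain ⟨q, hq, hyq⟩ := hyP
    by_cases hpq : p = q
    · subst hpq
      exact hmono p hp hxp hyq hxy
    have hpq : p.2 < q.1 := (hsep p hp q hq hpq).resolve_right fun hqp =>
      (hyq.2.trans_lt hqp).not_ge (hxp.1.trans hxy)
    calc h x ≤ g p.2 := (hbounds p hp x hxp).2
      _ ≤ g q.1 := hg (hPs p hp).2 (hPs q hq).1 hpq.le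
      _ ≤ h y := (hbounds q hq y hyq).1
  · obtain ⟨p, hp, hxp⟩ := hxP
    have hpy : p.2 ≤ y := (lt_of_not_ge fun hyp => hyP ⟨p, hp, hxp.1.trans hxy, hyp⟩).le
    calc h x ≤ g p.2 := (hbounds p hp x hxp).2
      _ ≤ g y := hg (hPs p hp).2 hy hpy
      _ = h y := (hout' y hy hyP).symm
  · obtain ⟨q, hq, hyq⟩ := hyP
    have hxq : x ≤ q.1 := (lt_of_not_ge fun hqx => hxP ⟨q, hq, hqx, hxy.trans hyq.2⟩).le
    calc h x = g x := hout' x hx hxP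
      _ ≤ g q.1 := hg hx (hPs q hq).1 hxq
      _ ≤ h y := (hbounds q hq y hyq).1
  · rw [hout' x hx hxP, hout' y hy hyP]
    exact hg hx hy hxy

/-- A value `y` not attained would leave an open gap in the image next to `f (sSup {f ≤ y})`. -/
theorem MonotoneOn.surjOn_Icc_of_subset_closure {α β : Type*}
    [ConditionallyCompleteLinearOrder α] [LinearOrder β] [TopologicalSpace β] [OrderTopology β]
    [DenselyOrdered β] {f : α → β} {a b : α} (hf : MonotoneOn f (Icc a b))
    (hdense : Icc (f a) (f b) ⊆ closure (f '' Icc a b)) :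
    SurjOn f (Icc a b) (Icc (f a) (f b)) := by
  intro y hy
  have hab : a ≤ b := nonempty_Icc.mp (closure_nonempty_iff.mp ⟨y, hdense hy⟩).of_image
  have hits : ∀ u v, f a ≤ u → v ≤ f b → u < v → ∃ t ∈ Icc a b, f t ∈ Ioo u v := by
    intro u v hu hv huv
    obtain ⟨c, hc⟩ := exists_between huv
    obtain ⟨_, hcuv, t, ht, rfl⟩ :=
      mem_closure_iff.mp (hdense ⟨hu.trans hc.1.le, hc.2.le.trans hv⟩) _ isOpen_Ioo hc
    exact ⟨t, ht, hcuv⟩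
  set S := {t ∈ Icc a b | f t ≤ y}
  have haS : a ∈ S := ⟨left_mem_Icc.mpr hab, hy.1⟩
  have hSb : BddAbove S := ⟨b, fun t ht => ht.1.2⟩
  have hx : sSup S ∈ Icc a b := ⟨le_csSup hSb haS, csSup_le ⟨a, haS⟩ fun t ht => ht.1.2⟩
  refine ⟨sSup S, hx, le_antisymm (not_lt.mp fun hlt => ?_) (not_lt.mp fun hlt => ?_)⟩
  · obtain ⟨t, ht, hyt, htx⟩ := hits y (f (sSup S)) hy.1 (hf hx ⟨hab, le_rfl⟩ hx.2) hlt
    rcases lt_or_ge t (sSup S) with hts | hst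
    · obtain ⟨s, hs, hts⟩ := exists_lt_of_lt_csSup ⟨a, haS⟩ hts
      exact ((hf ht hs.1 hts.le).trans hs.2).not_gt hyt
    · exact (hf hx ht hst).not_gt htx
  · obtain ⟨t, ht, hxt, hty⟩ := hits (f (sSup S)) y (hf ⟨le_rfl, hab⟩ hx hx.1) hy.2 hlt
    exact (hf ht hx (le_csSup hSb ⟨ht, hty.le⟩)).not_gt hxt

/-- Closed intervals `[a, b]` are encoded as pairs `(a, b)`. -/
def children (e : ℝ) (p : ℝ × ℝ) : Set (ℝ × ℝ) :=
  {(p.1, (p.1 + p.2) / 2 - e), ((p.1 + p.2) / 2 + e, p.2)}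

def cover (P : Set (ℝ × ℝ)) : Set ℝ := ⋃ p ∈ P, Icc p.1 p.2

theorem fst_le_and_snd_le_of_mem_children {e : ℝ} {p q : ℝ × ℝ} (he : 0 ≤ e)
    (hp : p.1 ≤ p.2) (hq : q ∈ children e p) : p.1 ≤ q.1 ∧ q.2 ≤ p.2 := by
  rcases hq with rfl | rfl <;> constructor <;> dsimp only <;> linarith

theorem snd_lt_fst_or_snd_lt_fst_of_mem_children {e : ℝ} {p q q' : ℝ × ℝ} (he : 0 < e)
    (hq : q ∈ children e p) (hq' : q' ∈ children e p) (hne : q ≠ q') : q.2 < q'.1 ∨ q'.2 < q.1 := by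
  rcases hq with rfl | rfl <;> rcases hq' with rfl | rfl
  · exact absurd rfl hne
  · left; dsimp only; linarith
  · right; dsimp only; linarith
  · exact absurd rfl hne

theorem children_translate (e c a b : ℝ) :
    children e (a + c, b + c) = (fun q : ℝ × ℝ => (q.1 + c, q.2 + c)) '' children e (a, b) := by
  simp only [children, image_insert_eq, image_singleton]
  ring_nf

/-- Indexed by `k + 1` instead of `k ≥ 1`, so that the paper's `f (k - 1)` becomes `f k` and no
truncated subtraction occurs. -/
structure CantorIntervals (ε w : ℕ → ℝ) (I : ℕ → Set (ℝ × ℝ)) : Prop where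
  w_one : w 1 = 1
  ε_one : ε 1 = 1 / 6
  w_succ_succ : ∀ k, w (k + 2) = w (k + 1) / 2 - ε (k + 1)
  ε_succ_succ_pos : ∀ k, 0 < ε (k + 2)
  ε_succ_succ_lt : ∀ k, ε (k + 2) < w (k + 1) / 4 - ε (k + 1) / 2
  I_one : I 1 = {(0, 1)}
  I_succ_succ : ∀ k, I (k + 2) = ⋃ p ∈ I (k + 1), children (ε (k + 1)) p

namespace CantorIntervals

variable {ε w : ℕ → ℝ} {I : ℕ → Set (ℝ × ℝ)} {k : ℕ} {p : ℝ × ℝ}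

theorem ε_succ_pos (h : CantorIntervals ε w I) (k : ℕ) : 0 < ε (k + 1) := by
  cases k with
  | zero => rw [h.ε_one]; norm_num
  | succ k => exact h.ε_succ_succ_pos k

theorem two_mul_ε_lt_w (h : CantorIntervals ε w I) (k : ℕ) : 2 * ε (k + 1) < w (k + 1) := by
  cases k with
  | zero => rw [h.ε_one, h.w_one]; norm_num
  | succ k => linarith [h.ε_succ_succ_lt k, h.w_succ_succ k]

theorem w_succ_pos (h : CantorIntervals ε w I) (k : ℕ) : 0 < w (k + 1) := by
  linarith [h.ε_succ_pos k, h.two_mul_ε_lt_w k]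

theorem w_succ_succ_eq_two_mul (h : CantorIntervals ε w I) (k : ℕ) :
    w (k + 2) = 2 * w (k + 3) + 2 * ε (k + 2) := by
  have : w (k + 3) = w (k + 2) / 2 - ε (k + 2) := h.w_succ_succ (k + 1)
  linarith

theorem mem_I_succ_succ (h : CantorIntervals ε w I) {q : ℝ × ℝ} :
    q ∈ I (k + 2) ↔ ∃ p ∈ I (k + 1), q ∈ children (ε (k + 1)) p := by
  simp only [h.I_succ_succ, mem_iUnion₂, exists_prop]

theorem snd_sub_fst (h : CantorIntervals ε w I) (hp : p ∈ I (k + 1)) :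
    p.2 - p.1 = w (k + 1) := by
  induction k generalizing p with
  | zero =>
    rw [h.I_one, mem_singleton_iff] at hp
    rw [hp, h.w_one]
    norm_num
  | succ k ih =>
    obtain ⟨p', hp', hpp'⟩ := h.mem_I_succ_succ.mp hp
    have := ih hp'
    have := h.w_succ_succ k
    rcases hpp' with rfl | rfl <;> dsimp only <;> linarith

theorem fst_le_snd (h : CantorIntervals ε w I) (hp : p ∈ I (k + 1)) : p.1 ≤ p.2 := by
  linarith [h.snd_sub_fst hp, h.w_succ_pos k]

theorem gap_endpoints_eq (h : CantorIntervals ε w I) (hp : p ∈ I (k + 1)) :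
    (p.1 + p.2) / 2 - ε (k + 1) = p.1 + w (k + 2) ∧
      (p.1 + p.2) / 2 + ε (k + 1) = p.2 - w (k + 2) := by
  have := h.snd_sub_fst hp
  have := h.w_succ_succ k
  constructor <;> linarith

theorem Icc_subset_Icc_zero_one (h : CantorIntervals ε w I) (hp : p ∈ I (k + 1)) :
    Icc p.1 p.2 ⊆ Icc 0 1 := by
  induction k generalizing p with
  | zero =>
    rw [h.I_one, mem_singleton_iff] at hp
    rw [hp]
  | succ k ih =>
    obtain ⟨p', hp', hpp'⟩ := h.mem_I_succ_succ.mp hp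
    obtain ⟨h1, h2⟩ :=
      fst_le_and_snd_le_of_mem_children (h.ε_succ_pos k).le (h.fst_le_snd hp') hpp'
    exact (Icc_subset_Icc h1 h2).trans (ih hp')

theorem fst_mem_Icc_zero_one (h : CantorIntervals ε w I) (hp : p ∈ I (k + 1)) :
    p.1 ∈ Icc (0 : ℝ) 1 :=
  h.Icc_subset_Icc_zero_one hp (left_mem_Icc.mpr (h.fst_le_snd hp))

theorem snd_mem_Icc_zero_one (h : CantorIntervals ε w I) (hp : p ∈ I (k + 1)) :
    p.2 ∈ Icc (0 : ℝ) 1 :=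
  h.Icc_subset_Icc_zero_one hp (right_mem_Icc.mpr (h.fst_le_snd hp))

theorem snd_lt_fst_or_snd_lt_fst_of_ne (h : CantorIntervals ε w I) {q : ℝ × ℝ}
    (hp : p ∈ I (k + 1)) (hq : q ∈ I (k + 1)) (hpq : p ≠ q) : p.2 < q.1 ∨ q.2 < p.1 := by
  induction k generalizing p q with
  | zero =>
    rw [h.I_one] at hp hq
    exact absurd (hp.trans hq.symm) hpq
  | succ k ih =>
    obtain ⟨p', hp', hpp'⟩ := h.mem_I_succ_succ.mp hp
    obtain ⟨q', hq', hqq'⟩ := h.mem_I_succ_succ.mp hq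
    by_cases hpq' : p' = q'
    · subst hpq'
      exact snd_lt_fst_or_snd_lt_fst_of_mem_children (h.ε_succ_pos k) hpp' hqq' hpq
    have := fst_le_and_snd_le_of_mem_children (h.ε_succ_pos k).le (h.fst_le_snd hp') hpp'
    have := fst_le_and_snd_le_of_mem_children (h.ε_succ_pos k).le (h.fst_le_snd hq') hqq'
    rcases ih hp' hq' hpq' with hlt | hlt
    · left; linarith
    · right; linarith

theorem antitone_cover (h : CantorIntervals ε w I) : Antitone fun k => cover (I (k + 1)) := by
  refine antitone_nat_of_succ_le fun k => ?_
  simp only [cover, iUnion₂_subset_iff]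
  intro q hq
  obtain ⟨p, hp, hqp⟩ := h.mem_I_succ_succ.mp hq
  obtain ⟨h1, h2⟩ := fst_le_and_snd_le_of_mem_children (h.ε_succ_pos k).le (h.fst_le_snd hp) hqp
  exact (Icc_subset_Icc h1 h2).trans
    (subset_biUnion_of_mem (u := fun p : ℝ × ℝ => Icc p.1 p.2) hp)

theorem not_mem_cover_of_mem_gap (h : CantorIntervals ε w I) {x : ℝ} (hp : p ∈ I (k + 1))
    (hx : x ∈ Ioo ((p.1 + p.2) / 2 - ε (k + 1)) ((p.1 + p.2) / 2 + ε (k + 1))) :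
    x ∉ cover (I (k + 2)) := by
  simp only [cover, mem_iUnion₂, not_exists]
  intro q hq hxq
  obtain ⟨p', hp', hqp'⟩ := h.mem_I_succ_succ.mp hq
  by_cases hpp' : p' = p
  · subst hpp'
    rcases hqp' with rfl | rfl
    · exact hxq.2.not_gt hx.1
    · exact hxq.1.not_gt hx.2
  obtain ⟨h1, h2⟩ :=
    fst_le_and_snd_le_of_mem_children (h.ε_succ_pos k).le (h.fst_le_snd hp') hqp'
  have := h.gap_endpoints_eq hp
  have := h.w_succ_pos (k + 1)
  rcases h.snd_lt_fst_or_snd_lt_fst_of_ne hp' hp hpp' with hlt | hlt <;>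
    linarith [hxq.1, hxq.2, hx.1, hx.2]

theorem monotone_image_fst (h : CantorIntervals ε w I) :
    Monotone fun k => Prod.fst '' I (k + 1) := by
  refine monotone_nat_of_le_succ fun k => ?_
  rintro _ ⟨p, hp, rfl⟩
  exact ⟨_, h.mem_I_succ_succ.mpr ⟨p, hp, Or.inl rfl⟩, rfl⟩

theorem monotone_image_snd (h : CantorIntervals ε w I) :
    Monotone fun k => Prod.snd '' I (k + 1) := by
  refine monotone_nat_of_le_succ fun k => ?_
  rintro _ ⟨p, hp, rfl⟩
  exact ⟨_, h.mem_I_succ_succ.mpr ⟨p, hp, Or.inr rfl⟩, rfl⟩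

theorem tendsto_w (h : CantorIntervals ε w I) : Tendsto w atTop (𝓝 0) := by
  have hle : ∀ n, w (n + 1) ≤ (1 / 2) ^ n := by
    intro n
    induction n with
    | zero => simp [h.w_one]
    | succ n ih =>
      rw [h.w_succ_succ, pow_succ]
      linarith [h.ε_succ_pos n]
  rw [← tendsto_add_atTop_iff_nat 1]
  exact squeeze_zero (fun n => (h.w_succ_pos n).le) hle
    (tendsto_pow_atTop_nhds_zero_of_lt_one (by norm_num) (by norm_num))

end CantorIntervals

structure CantorConstruction (ε w : ℕ → ℝ) (I : ℕ → Set (ℝ × ℝ)) (f : ℕ → ℝ → ℝ) : Prop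
    extends CantorIntervals ε w I where
  f_zero : ∀ x, f 0 x = x / 3
  f_left : ∀ k, ∀ p ∈ I (k + 1), ∀ x, p.1 ≤ x → x ≤ (p.1 + p.2) / 2 - ε (k + 1) →
    f (k + 1) x = w (k + 3) / w (k + 2) * (x - p.1) + f k p.1
  f_mid : ∀ k, ∀ p ∈ I (k + 1), ∀ x, |x - (p.1 + p.2) / 2| < ε (k + 1) →
    f (k + 1) x =
      ε (k + 2) / ε (k + 1) * (x - (p.1 + p.2) / 2 + ε (k + 1)) + f k p.1 + w (k + 3)
  f_right : ∀ k, ∀ p ∈ I (k + 1), ∀ x, (p.1 + p.2) / 2 + ε (k + 1) ≤ x → x ≤ p.2 →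
    f (k + 1) x = w (k + 3) / w (k + 2) * (x - (p.1 + p.2) / 2 - ε (k + 1)) + f k p.1
      + w (k + 3) + 2 * ε (k + 2)
  f_out : ∀ k, ∀ x ∈ Icc 0 1 \ cover (I (k + 1)), f (k + 1) x = f k x

namespace CantorConstruction

variable {ε w : ℕ → ℝ} {I : ℕ → Set (ℝ × ℝ)} {f : ℕ → ℝ → ℝ} {k : ℕ} {p : ℝ × ℝ}
  {F : ℝ → ℝ}

theorem f_succ_fst (h : CantorConstruction ε w I f) (hp : p ∈ I (k + 1)) :
    f (k + 1) p.1 = f k p.1 := by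
  obtain ⟨h1, -⟩ := h.gap_endpoints_eq hp
  rw [h.f_left k p hp p.1 le_rfl (by linarith [h.w_succ_pos (k + 1)])]
  ring

theorem f_succ_gap_left (h : CantorConstruction ε w I f) (hp : p ∈ I (k + 1)) :
    f (k + 1) ((p.1 + p.2) / 2 - ε (k + 1)) = f k p.1 + w (k + 3) := by
  obtain ⟨h1, -⟩ := h.gap_endpoints_eq hp
  have := h.w_succ_pos (k + 1)
  rw [h.f_left k p hp _ (by linarith) le_rfl, h1, add_sub_cancel_left,
    div_mul_cancel₀ _ this.ne']
  ring

theorem f_succ_gap_right (h : CantorConstruction ε w I f) (hp : p ∈ I (k + 1)) :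
    f (k + 1) ((p.1 + p.2) / 2 + ε (k + 1)) = f k p.1 + w (k + 3) + 2 * ε (k + 2) := by
  obtain ⟨-, h2⟩ := h.gap_endpoints_eq hp
  rw [h.f_right k p hp _ le_rfl (by linarith [h.w_succ_pos (k + 1)])]
  ring

theorem f_succ_snd_eq_add (h : CantorConstruction ε w I f) (hp : p ∈ I (k + 1)) :
    f (k + 1) p.2 = f k p.1 + w (k + 2) := by
  obtain ⟨-, h2⟩ := h.gap_endpoints_eq hp
  have := h.w_succ_pos (k + 1)
  rw [h.f_right k p hp _ (by linarith) le_rfl,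
    show p.2 - (p.1 + p.2) / 2 - ε (k + 1) = w (k + 2) by linarith, div_mul_cancel₀ _ this.ne']
  linarith [h.w_succ_succ_eq_two_mul k]

theorem f_snd_eq_add (h : CantorConstruction ε w I f) (hp : p ∈ I (k + 1)) :
    f k p.2 = f k p.1 + w (k + 2) := by
  cases k with
  | zero =>
    rw [h.I_one, mem_singleton_iff] at hp
    have : w 2 = w 1 / 2 - ε 1 := h.w_succ_succ 0
    rw [hp, h.f_zero, h.f_zero, this, h.w_one, h.ε_one]
    norm_num
  | succ k =>
    obtain ⟨p', hp', hpp'⟩ := h.mem_I_succ_succ.mp hp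
    have := h.w_succ_succ_eq_two_mul k
    rcases hpp' with rfl | rfl
    · exact (h.f_succ_gap_left hp').trans (by rw [h.f_succ_fst hp'])
    · exact (h.f_succ_snd_eq_add hp').trans (by rw [h.f_succ_gap_right hp']; linarith)

theorem f_succ_snd_eq (h : CantorConstruction ε w I f) (hp : p ∈ I (k + 1)) :
    f (k + 1) p.2 = f k p.2 := by
  rw [h.f_succ_snd_eq_add hp, h.f_snd_eq_add hp]

theorem f_succ_eq_of_mem_Icc_gap (h : CantorConstruction ε w I f) (hp : p ∈ I (k + 1)) {x : ℝ}
    (hx : x ∈ Icc ((p.1 + p.2) / 2 - ε (k + 1)) ((p.1 + p.2) / 2 + ε (k + 1))) :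
    f (k + 1) x =
      ε (k + 2) / ε (k + 1) * (x - ((p.1 + p.2) / 2 - ε (k + 1))) + (f k p.1 + w (k + 3)) := by
  have hε := (h.ε_succ_pos k).ne'
  rcases hx.1.eq_or_lt with rfl | h1
  · rw [h.f_succ_gap_left hp]
    ring
  rcases hx.2.eq_or_lt with rfl | h2
  · rw [h.f_succ_gap_right hp]
    field_simp
    ring
  rw [h.f_mid k p hp x (abs_sub_lt_iff.mpr ⟨by linarith, by linarith⟩)]
  ring

theorem f_succ_monotoneOn_Icc (h : CantorConstruction ε w I f) (hp : p ∈ I (k + 1)) :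
    MonotoneOn (f (k + 1)) (Icc p.1 p.2) := by
  obtain ⟨h1, h2⟩ := h.gap_endpoints_eq hp
  have hw := h.w_succ_pos (k + 1)
  have hε := h.ε_succ_pos k
  have hs : 0 ≤ w (k + 3) / w (k + 2) := div_nonneg (h.w_succ_pos (k + 2)).le hw.le
  have hleft : MonotoneOn (f (k + 1)) (Icc p.1 ((p.1 + p.2) / 2 - ε (k + 1))) :=
    monotoneOn_of_eq_affine hs fun x hx => h.f_left k p hp x hx.1 hx.2
  have hmid : MonotoneOn (f (k + 1))
      (Icc ((p.1 + p.2) / 2 - ε (k + 1)) ((p.1 + p.2) / 2 + ε (k + 1))) :=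
    monotoneOn_of_eq_affine (div_nonneg (h.ε_succ_pos (k + 1)).le hε.le)
      fun x hx => h.f_succ_eq_of_mem_Icc_gap hp hx
  have hright : MonotoneOn (f (k + 1)) (Icc ((p.1 + p.2) / 2 + ε (k + 1)) p.2) :=
    monotoneOn_of_eq_affine (d := (p.1 + p.2) / 2 + ε (k + 1))
      (e := f k p.1 + w (k + 3) + 2 * ε (k + 2)) hs fun x hx => by
      rw [h.f_right k p hp x hx.1 hx.2]
      ring
  have hle1 : p.1 ≤ (p.1 + p.2) / 2 - ε (k + 1) := by linarith
  have hle2 : (p.1 + p.2) / 2 - ε (k + 1) ≤ (p.1 + p.2) / 2 + ε (k + 1) := by linarith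
  have hle3 : (p.1 + p.2) / 2 + ε (k + 1) ≤ p.2 := by linarith
  have hleft_mid : MonotoneOn (f (k + 1)) (Icc p.1 ((p.1 + p.2) / 2 + ε (k + 1))) := by
    rw [← Icc_union_Icc_eq_Icc hle1 hle2]
    exact hleft.union_right hmid (isGreatest_Icc hle1) (isLeast_Icc hle2)
  rw [← Icc_union_Icc_eq_Icc (hle1.trans hle2) hle3]
  exact hleft_mid.union_right hright (isGreatest_Icc (hle1.trans hle2)) (isLeast_Icc hle3)

theorem f_monotoneOn (h : CantorConstruction ε w I f) (n : ℕ) : MonotoneOn (f n) (Icc 0 1) := by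
  induction n with
  | zero =>
    intro x _ y _ hxy
    rw [h.f_zero, h.f_zero]
    linarith
  | succ k ih =>
    exact ih.of_eqOn_diff_biUnion_Icc
      (fun p hp => ⟨h.fst_mem_Icc_zero_one hp, h.snd_mem_Icc_zero_one hp⟩)
      (fun p hp q hq => h.snd_lt_fst_or_snd_lt_fst_of_ne hp hq) (h.f_out k)
      (fun p hp => h.f_succ_monotoneOn_Icc hp) fun p hp => ⟨h.f_succ_fst hp, h.f_succ_snd_eq hp⟩

theorem F_fst_eq_f (h : CantorConstruction ε w I f)
    (hF : ∀ x ∈ Icc (0 : ℝ) 1, Tendsto (fun n => f n x) atTop (𝓝 (F x)))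
    (hp : p ∈ I (k + 1)) : F p.1 = f k p.1 := by
  refine eq_of_tendsto_of_succ_eq (hF _ (h.fst_mem_Icc_zero_one hp)) fun n hn => ?_
  obtain ⟨q, hq, hqp⟩ := h.monotone_image_fst hn (mem_image_of_mem Prod.fst hp)
  rw [← hqp]
  exact h.f_succ_fst hq

theorem F_snd_eq_f (h : CantorConstruction ε w I f)
    (hF : ∀ x ∈ Icc (0 : ℝ) 1, Tendsto (fun n => f n x) atTop (𝓝 (F x)))
    (hp : p ∈ I (k + 1)) : F p.2 = f k p.2 := by
  refine eq_of_tendsto_of_succ_eq (hF _ (h.snd_mem_Icc_zero_one hp)) fun n hn => ?_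
  obtain ⟨q, hq, hqp⟩ := h.monotone_image_snd hn (mem_image_of_mem Prod.snd hp)
  rw [← hqp]
  exact h.f_succ_snd_eq hq

theorem F_snd_eq_add (h : CantorConstruction ε w I f)
    (hF : ∀ x ∈ Icc (0 : ℝ) 1, Tendsto (fun n => f n x) atTop (𝓝 (F x)))
    (hp : p ∈ I (k + 1)) : F p.2 = F p.1 + w (k + 2) := by
  rw [h.F_snd_eq_f hF hp, h.F_fst_eq_f hF hp, h.f_snd_eq_add hp]

theorem F_gap_left (h : CantorConstruction ε w I f)
    (hF : ∀ x ∈ Icc (0 : ℝ) 1, Tendsto (fun n => f n x) atTop (𝓝 (F x)))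
    (hp : p ∈ I (k + 1)) : F ((p.1 + p.2) / 2 - ε (k + 1)) = F p.1 + w (k + 3) := by
  have hL : (p.1, (p.1 + p.2) / 2 - ε (k + 1)) ∈ I (k + 2) :=
    h.mem_I_succ_succ.mpr ⟨p, hp, Or.inl rfl⟩
  rw [h.F_snd_eq_f hF hL, h.f_succ_gap_left hp, h.F_fst_eq_f hF hp]

theorem F_gap_right (h : CantorConstruction ε w I f)
    (hF : ∀ x ∈ Icc (0 : ℝ) 1, Tendsto (fun n => f n x) atTop (𝓝 (F x)))
    (hp : p ∈ I (k + 1)) :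
    F ((p.1 + p.2) / 2 + ε (k + 1)) = F p.1 + w (k + 3) + 2 * ε (k + 2) := by
  have hR : ((p.1 + p.2) / 2 + ε (k + 1), p.2) ∈ I (k + 2) :=
    h.mem_I_succ_succ.mpr ⟨p, hp, Or.inr rfl⟩
  rw [h.F_fst_eq_f hF hR, h.f_succ_gap_right hp, h.F_fst_eq_f hF hp]

theorem F_eq_of_mem_gap (h : CantorConstruction ε w I f)
    (hF : ∀ x ∈ Icc (0 : ℝ) 1, Tendsto (fun n => f n x) atTop (𝓝 (F x)))
    (hp : p ∈ I (k + 1)) {x : ℝ}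
    (hx : x ∈ Ioo ((p.1 + p.2) / 2 - ε (k + 1)) ((p.1 + p.2) / 2 + ε (k + 1))) :
    F x = ε (k + 2) / ε (k + 1) * (x - ((p.1 + p.2) / 2 - ε (k + 1)))
      + F ((p.1 + p.2) / 2 - ε (k + 1)) := by
  obtain ⟨h1, h2⟩ := h.gap_endpoints_eq hp
  have hx01 : x ∈ Icc (0 : ℝ) 1 :=
    h.Icc_subset_Icc_zero_one hp ⟨by linarith [hx.1, h.w_succ_pos (k + 1)],
      by linarith [hx.2, h.w_succ_pos (k + 1)]⟩
  have hconst : ∀ n ≥ k + 1, f (n + 1) x = f n x := fun n hn =>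
    h.f_out n x ⟨hx01, fun hxn => h.not_mem_cover_of_mem_gap hp hx (h.antitone_cover hn hxn)⟩
  rw [eq_of_tendsto_of_succ_eq (hF x hx01) hconst,
    h.f_succ_eq_of_mem_Icc_gap hp (Ioo_subset_Icc_self hx), h.F_gap_left hF hp, h.F_fst_eq_f hF hp]

theorem F_monotoneOn (h : CantorConstruction ε w I f)
    (hF : ∀ x ∈ Icc (0 : ℝ) 1, Tendsto (fun n => f n x) atTop (𝓝 (F x))) :
    MonotoneOn F (Icc 0 1) := fun x hx y hy hxy =>
  le_of_tendsto_of_tendsto' (hF x hx) (hF y hy) fun n => h.f_monotoneOn n hx hy hxy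

theorem exists_abs_F_sub_le (h : CantorConstruction ε w I f)
    (hF : ∀ x ∈ Icc (0 : ℝ) 1, Tendsto (fun n => f n x) atTop (𝓝 (F x))) (n : ℕ) :
    ∀ k, ∀ p ∈ I (k + 1), ∀ y ∈ Icc (F p.1) (F p.2),
      ∃ x ∈ Icc p.1 p.2, |F x - y| ≤ w (k + n + 2) := by
  induction n with
  | zero =>
    intro k p hp y hy
    refine ⟨p.1, left_mem_Icc.mpr (h.fst_le_snd hp), ?_⟩
    rw [abs_sub_comm, abs_of_nonneg (by linarith [hy.1])]
    linarith [hy.2, h.F_snd_eq_add hF hp]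
  | succ n ih =>
    intro k p hp y hy
    obtain ⟨h1, h2⟩ := h.gap_endpoints_eq hp
    have hw := h.w_succ_pos (k + 1)
    have hε := h.ε_succ_pos k
    have hidx : k + 1 + n + 2 = k + (n + 1) + 2 := by omega
    rcases le_or_gt y (F ((p.1 + p.2) / 2 - ε (k + 1))) with hyL | hyL
    · obtain ⟨x, hx, hxy⟩ :=
        ih (k + 1) _ (h.mem_I_succ_succ.mpr ⟨p, hp, Or.inl rfl⟩) y ⟨hy.1, hyL⟩
      exact ⟨x, ⟨hx.1, hx.2.trans (by linarith)⟩, hidx ▸ hxy⟩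
    rcases le_or_gt (F ((p.1 + p.2) / 2 + ε (k + 1))) y with hyR | hyR
    · obtain ⟨x, hx, hxy⟩ :=
        ih (k + 1) _ (h.mem_I_succ_succ.mpr ⟨p, hp, Or.inr rfl⟩) y ⟨hyR, hy.2⟩
      exact ⟨x, ⟨by linarith [hx.1], hx.2⟩, hidx ▸ hxy⟩
    -- inside the gap `F` is affine with positive slope, so `y` is attained exactly
    set t := ε (k + 2) / ε (k + 1)
    have ht : 0 < t := div_pos (h.ε_succ_pos (k + 1)) hε
    have hslope : 2 * ε (k + 1) * t = 2 * ε (k + 2) := by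
      simp only [t]
      field_simp
    have hgapL := h.F_gap_left hF hp
    have hgapR := h.F_gap_right hF hp
    obtain ⟨x, hxdef⟩ : ∃ x, x - ((p.1 + p.2) / 2 - ε (k + 1)) =
        (y - F ((p.1 + p.2) / 2 - ε (k + 1))) / t := ⟨_, add_sub_cancel_left _ _⟩
    have hx : x ∈ Ioo ((p.1 + p.2) / 2 - ε (k + 1)) ((p.1 + p.2) / 2 + ε (k + 1)) := by
      have hpos : 0 < (y - F ((p.1 + p.2) / 2 - ε (k + 1))) / t := div_pos (by linarith) ht
      have hlt : (y - F ((p.1 + p.2) / 2 - ε (k + 1))) / t < 2 * ε (k + 1) := by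
        rw [div_lt_iff₀ ht, hslope]
        linarith
      constructor <;> linarith
    refine ⟨x, ⟨by linarith [hx.1], by linarith [hx.2]⟩, ?_⟩
    rw [h.F_eq_of_mem_gap hF hp hx, hxdef, mul_div_cancel₀ _ ht.ne', sub_add_cancel, sub_self,
      abs_zero]
    exact (h.w_succ_pos _).le

theorem F_image_Icc (h : CantorConstruction ε w I f)
    (hF : ∀ x ∈ Icc (0 : ℝ) 1, Tendsto (fun n => f n x) atTop (𝓝 (F x)))
    (hp : p ∈ I (k + 1)) : F '' Icc p.1 p.2 = Icc (F p.1) (F p.2) := by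
  have hmono : MonotoneOn F (Icc p.1 p.2) :=
    (h.F_monotoneOn hF).mono (h.Icc_subset_Icc_zero_one hp)
  refine hmono.image_Icc_subset.antisymm (hmono.surjOn_Icc_of_subset_closure fun y hy => ?_)
  refine Metric.mem_closure_iff.mpr fun δ hδ => ?_
  obtain ⟨N, hN⟩ := eventually_atTop.mp (h.tendsto_w.eventually (gt_mem_nhds hδ))
  obtain ⟨x, hx, hxy⟩ := h.exists_abs_F_sub_le hF N k p hp y hy
  refine ⟨F x, mem_image_of_mem F hx, ?_⟩
  rw [Real.dist_eq, abs_sub_comm]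
  exact hxy.trans_lt (hN _ (by omega))

theorem children_F_eq_image (h : CantorConstruction ε w I f)
    (hF : ∀ x ∈ Icc (0 : ℝ) 1, Tendsto (fun n => f n x) atTop (𝓝 (F x)))
    (hp : p ∈ I (k + 1)) :
    children (ε (k + 2)) (F p.1, F p.2) =
      (fun q : ℝ × ℝ => (F q.1, F q.2)) '' children (ε (k + 1)) p := by
  have hw : w (k + 3) = w (k + 2) / 2 - ε (k + 2) := h.w_succ_succ (k + 1)
  simp only [children, image_insert_eq, image_singleton]
  rw [h.F_gap_left hF hp, h.F_gap_right hF hp, h.F_snd_eq_add hF hp, hw]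
  ring_nf

theorem I_succ_succ_eq_image (h : CantorConstruction ε w I f)
    (hF : ∀ x ∈ Icc (0 : ℝ) 1, Tendsto (fun n => f n x) atTop (𝓝 (F x))) (k : ℕ) :
    I (k + 2) = (fun p => (F p.1, F p.2)) '' I (k + 1) ∪
      (fun p => (F p.1 + 2 / 3, F p.2 + 2 / 3)) '' I (k + 1) := by
  induction k with
  | zero =>
    have h01 : ((0 : ℝ), (1 : ℝ)) ∈ I (0 + 1) := by rw [h.I_one]; rfl
    have hF0 : F 0 = 0 := by simpa [h.f_zero] using h.F_fst_eq_f hF h01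
    have hw2 : w 2 = 1 / 3 := by
      rw [show w 2 = w 1 / 2 - ε 1 from h.w_succ_succ 0, h.w_one, h.ε_one]
      norm_num
    have hF1 : F 1 = 1 / 3 := by simpa [hF0, hw2] using h.F_snd_eq_add hF h01
    rw [h.I_succ_succ 0, zero_add, h.I_one, biUnion_singleton, image_singleton, image_singleton,
      children, insert_eq, h.ε_one, hF0, hF1]
    norm_num
  | succ k ih =>
    conv_lhs => rw [h.I_succ_succ (k + 1), ih]
    rw [h.I_succ_succ k, biUnion_union, biUnion_image, biUnion_image, image_iUnion₂,
      image_iUnion₂]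
    congr 1 <;> refine iUnion₂_congr fun p hp => ?_
    · exact h.children_F_eq_image hF hp
    · rw [children_translate, h.children_F_eq_image hF hp, image_image]

theorem cover_succ_succ_eq_image (h : CantorConstruction ε w I f)
    (hF : ∀ x ∈ Icc (0 : ℝ) 1, Tendsto (fun n => f n x) atTop (𝓝 (F x))) (k : ℕ) :
    cover (I (k + 2)) =
      F '' cover (I (k + 1)) ∪ (fun x => F x + 2 / 3) '' cover (I (k + 1)) := by
  simp only [cover]
  rw [h.I_succ_succ_eq_image hF k, biUnion_union, biUnion_image, biUnion_image, image_iUnion₂,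
    image_iUnion₂]
  congr 1 <;> refine iUnion₂_congr fun p hp => ?_
  · exact (h.F_image_Icc hF hp).symm
  · rw [← image_image (· + 2 / 3) F, h.F_image_Icc hF hp, image_add_const_Icc]

end CantorConstruction

theorem stmt_18_general
    (ε w : ℕ → ℝ)
    (hw1 : w 1 = 1) (hε1 : ε 1 = 1 / 6)
    (hwrec : ∀ k, 1 ≤ k → w (k + 1) = w k / 2 - ε k)
    (hεpos : ∀ k, 1 ≤ k → 0 < ε (k + 1))
    (hεw : ∀ k, 1 ≤ k → ε (k + 1) < w k / 4 - ε k / 2)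
    (I : ℕ → Set (ℝ × ℝ))
    (hI1 : I 1 = {((0 : ℝ), (1 : ℝ))})
    (hIrec : ∀ k, 1 ≤ k → I (k + 1) =
      ⋃ p ∈ I k, {(p.1, (p.1 + p.2) / 2 - ε k), ((p.1 + p.2) / 2 + ε k, p.2)})
    (A : ℕ → Set ℝ)
    (hA : ∀ k, A k = ⋃ p ∈ I k, Set.Icc p.1 p.2)
    (f : ℕ → ℝ → ℝ)
    (hf0 : ∀ x, f 0 x = x / 3)
    (hfleft : ∀ k, 1 ≤ k → ∀ p ∈ I k, ∀ x : ℝ, p.1 ≤ x → x ≤ (p.1 + p.2) / 2 - ε k →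
      f k x = w (k + 2) / w (k + 1) * (x - p.1) + f (k - 1) p.1)
    (hfmid : ∀ k, 1 ≤ k → ∀ p ∈ I k, ∀ x : ℝ, |x - (p.1 + p.2) / 2| < ε k →
      f k x = ε (k + 1) / ε k * (x - (p.1 + p.2) / 2 + ε k) + f (k - 1) p.1 + w (k + 2))
    (hfright : ∀ k, 1 ≤ k → ∀ p ∈ I k, ∀ x : ℝ, (p.1 + p.2) / 2 + ε k ≤ x → x ≤ p.2 →
      f k x = w (k + 2) / w (k + 1) * (x - (p.1 + p.2) / 2 - ε k) + f (k - 1) p.1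
        + w (k + 2) + 2 * ε (k + 1))
    (hfout : ∀ k, 1 ≤ k → ∀ x ∈ Set.Icc (0 : ℝ) 1 \ (⋃ p ∈ I k, Set.Icc p.1 p.2),
      f k x = f (k - 1) x)
    (F : ℝ → ℝ)
    (hFlim : ∀ x ∈ Set.Icc (0 : ℝ) 1, Filter.Tendsto (fun k => f k x) Filter.atTop (nhds (F x)))
    (g : ℝ → ℝ) (hg : ∀ x, g x = F x + 2 / 3)
    :
    ∀ k, 1 ≤ k → A (k + 1) = F '' A k ∪ g '' A k := by
  have h : CantorConstruction ε w I f :=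
    { w_one := hw1
      ε_one := hε1
      w_succ_succ := fun k => hwrec (k + 1) k.succ_pos
      ε_succ_succ_pos := fun k => hεpos (k + 1) k.succ_pos
      ε_succ_succ_lt := fun k => hεw (k + 1) k.succ_pos
      I_one := hI1
      I_succ_succ := fun k => hIrec (k + 1) k.succ_pos
      f_zero := hf0
      f_left := fun k => hfleft (k + 1) k.succ_pos
      f_mid := fun k => hfmid (k + 1) k.succ_pos
      f_right := fun k => hfright (k + 1) k.succ_pos
      f_out := fun k => hfout (k + 1) k.succ_pos }
  intro k hk
  obtain ⟨k, rfl⟩ := Nat.exists_eq_add_of_le' hk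
  obtain rfl : g = fun x => F x + 2 / 3 := funext hg
  rw [hA, hA]
  exact h.cover_succ_succ_eq_image hFlim k

theorem stmt_18
    (ε w : ℕ → ℝ)
    (hw1 : w 1 = 1) (hε1 : ε 1 = 1 / 6)
    (hwrec : ∀ k, 1 ≤ k → w (k + 1) = w k / 2 - ε k)
    (hεpos : ∀ k, 1 ≤ k → 0 < ε (k + 1))
    (hεgeom : ∀ k, 1 ≤ k → 2 ^ k * ε (k + 1) < 1 / 2 * (1 / 4 ^ k))
    (hεquot : ∀ k, 1 ≤ k → ε (k + 1) / ε k < 1 / 2)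
    (hεw : ∀ k, 1 ≤ k → ε (k + 1) < w k / 4 - ε k / 2)
    (I : ℕ → Set (ℝ × ℝ))
    (hI1 : I 1 = {((0 : ℝ), (1 : ℝ))})
    (hIrec : ∀ k, 1 ≤ k → I (k + 1) =
      ⋃ p ∈ I k, {(p.1, (p.1 + p.2) / 2 - ε k), ((p.1 + p.2) / 2 + ε k, p.2)})
    (A : ℕ → Set ℝ)
    (hA : ∀ k, A k = ⋃ p ∈ I k, Set.Icc p.1 p.2)
    (f : ℕ → ℝ → ℝ)
    (hf0 : ∀ x, f 0 x = x / 3)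
    (hfmaps : ∀ k, Set.MapsTo (f k) (Set.Icc (0 : ℝ) 1) (Set.Icc (0 : ℝ) 1))
    (hfleft : ∀ k, 1 ≤ k → ∀ p ∈ I k, ∀ x : ℝ, p.1 ≤ x → x ≤ (p.1 + p.2) / 2 - ε k →
      f k x = w (k + 2) / w (k + 1) * (x - p.1) + f (k - 1) p.1)
    (hfmid : ∀ k, 1 ≤ k → ∀ p ∈ I k, ∀ x : ℝ, |x - (p.1 + p.2) / 2| < ε k →
      f k x = ε (k + 1) / ε k * (x - (p.1 + p.2) / 2 + ε k) + f (k - 1) p.1 + w (k + 2))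
    (hfright : ∀ k, 1 ≤ k → ∀ p ∈ I k, ∀ x : ℝ, (p.1 + p.2) / 2 + ε k ≤ x → x ≤ p.2 →
      f k x = w (k + 2) / w (k + 1) * (x - (p.1 + p.2) / 2 - ε k) + f (k - 1) p.1
        + w (k + 2) + 2 * ε (k + 1))
    (hfout : ∀ k, 1 ≤ k → ∀ x ∈ Set.Icc (0 : ℝ) 1 \ (⋃ p ∈ I k, Set.Icc p.1 p.2),
      f k x = f (k - 1) x)
    (F : ℝ → ℝ)
    (hFlim : ∀ x ∈ Set.Icc (0 : ℝ) 1, Filter.Tendsto (fun k => f k x) Filter.atTop (nhds (F x)))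
    (g : ℝ → ℝ) (hg : ∀ x, g x = F x + 2 / 3)
    :
    ∀ k, 1 ≤ k → A (k + 1) = F '' A k ∪ g '' A k :=
  stmt_18_general ε w hw1 hε1 hwrec hεpos hεw I hI1 hIrec A hA f hf0 hfleft hfmid hfright hfout F
    hFlim g hg
end

section
/- Let f be the uniform limit of the sequence (f_k) and let g = f + 2/3. Then the set A_* = ⋂_{k∈ℕ} A_k is nonempty, compact, and satisfies A_* = f(A_*) ∪ g(A_*); that is, A_* is the attractor of the iterated function system {f, g}. -/
open Set MeasureTheory Filter

open Function Topology Pointwise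

/-!
Address the intervals of `𝓘_{k+1}` by the first `k` turns of a sequence `σ : ℕ → Bool`
(`true` for the right half). A point lies in `A_*` iff it lies in all the intervals along some
infinite address (compactness of the Cantor space), and since the widths `w_k` at least halve
at each level, every address carries exactly one point.

On each interval of `𝓘_{k+1}` the map `f_{k+1}` is affine and sends the interval with address
`σ` into the subinterval with address `false :: σ` one level deeper. Passing to the limit, `f`
sends the point with address `σ` to the point with address `false :: σ`, and `g = f + 2/3`
sends it to the point with address `true :: σ`, because `w₁ - w₂ = 2/3` is exactly the offset
between the two halves of `[0, 1]`. As every address starts with `false` or `true`, this gives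
`A_* = f(A_*) ∪ g(A_*)`.
-/

namespace BinaryCells

def seqCons (b : Bool) (σ : ℕ → Bool) : ℕ → Bool
  | 0 => b
  | n + 1 => σ n

@[simp] lemma seqCons_zero (b : Bool) (σ : ℕ → Bool) : seqCons b σ 0 = b := rfl

@[simp] lemma seqCons_succ (b : Bool) (σ : ℕ → Bool) (n : ℕ) : seqCons b σ (n + 1) = σ n := rfl

lemma seqCons_head_tail (σ : ℕ → Bool) : seqCons (σ 0) (fun n => σ (n + 1)) = σ := by
  funext n
  cases n <;> rfl

theorem iUnion_eq_image_union_image {X : Type*} {S : (ℕ → Bool) → Set X} {F G : X → X}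
    (hne : ∀ σ, (S σ).Nonempty) (hsub : ∀ σ, (S σ).Subsingleton)
    (hF : ∀ σ, MapsTo F (S σ) (S (seqCons false σ)))
    (hG : ∀ σ, MapsTo G (S σ) (S (seqCons true σ))) :
    ⋃ σ, S σ = F '' (⋃ σ, S σ) ∪ G '' (⋃ σ, S σ) := by
  ext y
  simp only [mem_union, mem_image, mem_iUnion]
  constructor
  · rintro ⟨τ, hy⟩
    obtain ⟨x, hx⟩ := hne fun n => τ (n + 1)
    have hy' : y ∈ S (seqCons (τ 0) fun n => τ (n + 1)) := by rwa [seqCons_head_tail]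
    cases h : τ 0 <;> rw [h] at hy'
    · exact Or.inl ⟨x, ⟨_, hx⟩, hsub _ (hF _ hx) hy'⟩
    · exact Or.inr ⟨x, ⟨_, hx⟩, hsub _ (hG _ hx) hy'⟩
  · rintro (⟨x, ⟨σ, hx⟩, rfl⟩ | ⟨x, ⟨σ, hx⟩, rfl⟩)
    exacts [⟨_, hF σ hx⟩, ⟨_, hG σ hx⟩]

/-- The left endpoint of `cell w k σ`, the interval of `𝓘_{k+1}` reached by the turns
`σ 0, …, σ (k - 1)` (`true` = right half): a right turn at depth `i` skips the left child, of
width `w (i + 2)`, and the gap `2 ε (i + 1)`. -/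
def leftEnd (w : ℕ → ℝ) (k : ℕ) (σ : ℕ → Bool) : ℝ :=
  ∑ i ∈ Finset.range k, bif σ i then w (i + 1) - w (i + 2) else 0

def cell (w : ℕ → ℝ) (k : ℕ) (σ : ℕ → Bool) : Set ℝ :=
  Icc (leftEnd w k σ) (leftEnd w k σ + w (k + 1))

section Cells

variable {w : ℕ → ℝ}

@[simp] lemma leftEnd_zero (σ : ℕ → Bool) : leftEnd w 0 σ = 0 := rfl

lemma leftEnd_succ (k : ℕ) (σ : ℕ → Bool) :
    leftEnd w (k + 1) σ = leftEnd w k σ + bif σ k then w (k + 1) - w (k + 2) else 0 :=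
  Finset.sum_range_succ _ _

lemma leftEnd_update (k : ℕ) (σ : ℕ → Bool) (b : Bool) :
    leftEnd w k (update σ k b) = leftEnd w k σ :=
  Finset.sum_congr rfl fun i hi => by
    rw [update_of_ne (Finset.mem_range.1 hi).ne]

lemma leftEnd_seqCons_true (k : ℕ) (σ : ℕ → Bool) :
    leftEnd w (k + 1) (seqCons true σ) = leftEnd w (k + 1) (seqCons false σ) + (w 1 - w 2) := by
  simp only [leftEnd, Finset.sum_range_succ', seqCons_succ, seqCons_zero, cond_true, cond_false]
  ring

lemma continuous_leftEnd (k : ℕ) : Continuous (leftEnd w k) :=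
  continuous_finsetSum _ fun i _ =>
    (continuous_of_discreteTopology
      (f := fun b : Bool => bif b then w (i + 1) - w (i + 2) else 0)).comp (continuous_apply i)

lemma isClosed_setOf_mem_cell (k : ℕ) (x : ℝ) : IsClosed {σ | x ∈ cell w k σ} :=
  (isClosed_le (continuous_leftEnd k) continuous_const).inter
    (isClosed_le continuous_const ((continuous_leftEnd k).add continuous_const))

lemma iUnion_cell_eq_add (k : ℕ) : ⋃ σ, cell w k σ = range (leftEnd w k) + Icc 0 (w (k + 1)) := by
  ext x
  simp only [cell, mem_iUnion, Set.mem_add, mem_range, mem_Icc, exists_exists_eq_and]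
  constructor
  · rintro ⟨σ, h₁, h₂⟩
    exact ⟨σ, x - leftEnd w k σ, ⟨by linarith, by linarith⟩, by ring⟩
  · rintro ⟨σ, t, ⟨h₁, h₂⟩, rfl⟩
    exact ⟨σ, by linarith, by linarith⟩

variable (h0 : ∀ k, 0 ≤ w (k + 1)) (hmono : ∀ k, w (k + 2) ≤ w (k + 1))
include h0 hmono

lemma cell_succ_subset (k : ℕ) (σ : ℕ → Bool) : cell w (k + 1) σ ⊆ cell w k σ := by
  intro x ⟨h₁, h₂⟩
  rw [leftEnd_succ] at h₁ h₂
  have : 0 ≤ w (k + 2) := h0 (k + 1)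
  have := hmono k
  cases h : σ k <;> simp only [h, cond_true, cond_false] at h₁ h₂ <;>
    exact ⟨by linarith, by linarith⟩

lemma antitone_cell (σ : ℕ → Bool) : Antitone fun k => cell w k σ :=
  antitone_nat_of_succ_le fun k => cell_succ_subset h0 hmono k σ

lemma mem_iInter_cell_iff {x : ℝ} {σ : ℕ → Bool} :
    x ∈ ⋂ k, cell w k σ ↔ ∀ k, x ∈ cell w (k + 1) σ := by
  refine ⟨fun hx k => mem_iInter.1 hx (k + 1), fun hx => mem_iInter.2 fun k => ?_⟩
  exact antitone_cell h0 hmono σ k.le_succ (hx k)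

lemma nonempty_iInter_cell (σ : ℕ → Bool) : (⋂ k, cell w k σ).Nonempty :=
  IsCompact.nonempty_iInter_of_sequence_nonempty_isCompact_isClosed _
    (fun k => cell_succ_subset h0 hmono k σ)
    (fun k => nonempty_Icc.2 (le_add_of_nonneg_right (h0 k))) isCompact_Icc fun _ => isClosed_Icc

lemma iInter_iUnion_cell : ⋂ k, ⋃ σ, cell w k σ = ⋃ σ, ⋂ k, cell w k σ := by
  refine Subset.antisymm (fun x hx => ?_) iUnion_iInter_subset
  obtain ⟨σ, hσ⟩ := IsCompact.nonempty_iInter_of_sequence_nonempty_isCompact_isClosed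
    (fun k => {σ | x ∈ cell w k σ}) (fun k _ hσ => cell_succ_subset h0 hmono k _ hσ)
    (fun k => mem_iUnion.1 (mem_iInter.1 hx k)) (isClosed_setOf_mem_cell 0 x).isCompact
    fun k => isClosed_setOf_mem_cell k x
  exact mem_iUnion.2 ⟨σ, by simpa using hσ⟩

lemma isCompact_iUnion_iInter_cell : IsCompact (⋃ σ, ⋂ k, cell w k σ) := by
  have hc : ∀ k, IsCompact (⋃ σ, cell w k σ) := fun k => by
    rw [iUnion_cell_eq_add]
    exact (isCompact_range (continuous_leftEnd k)).add isCompact_Icc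
  rw [← iInter_iUnion_cell h0 hmono]
  exact (hc 0).of_isClosed_subset (isClosed_iInter fun k => (hc k).isClosed) (iInter_subset _ 0)

lemma mapsTo_add_iInter_cell_seqCons (σ : ℕ → Bool) :
    MapsTo (· + (w 1 - w 2)) (⋂ k, cell w k (seqCons false σ))
      (⋂ k, cell w k (seqCons true σ)) := by
  intro y hy
  rw [mem_iInter_cell_iff h0 hmono] at hy ⊢
  intro k
  obtain ⟨h₁, h₂⟩ := hy k
  simp only [cell, leftEnd_seqCons_true, mem_Icc]
  exact ⟨by linarith, by linarith⟩

lemma mapsTo_lim_iInter_cell (hw1 : w 1 = 1) {f : ℕ → ℝ → ℝ} {F : ℝ → ℝ}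
    (hlim : ∀ x ∈ Icc (0 : ℝ) 1, Tendsto (fun k => f k x) atTop (𝓝 (F x)))
    (hf : ∀ k σ, MapsTo (f (k + 1)) (cell w (k + 1) σ) (cell w (k + 2) (seqCons false σ)))
    (σ : ℕ → Bool) : MapsTo F (⋂ k, cell w k σ) (⋂ k, cell w k (seqCons false σ)) := by
  intro x hx
  have hx01 : x ∈ Icc (0 : ℝ) 1 := by simpa [cell, hw1] using mem_iInter.1 hx 0
  rw [mem_iInter_cell_iff h0 hmono]
  intro k
  refine isClosed_Icc.mem_of_tendsto ((hlim x hx01).comp (tendsto_add_atTop_nat 1)) ?_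
  filter_upwards [eventually_ge_atTop k] with m hm
  exact antitone_cell h0 hmono _ (by omega : k + 1 ≤ m + 2) (hf m σ (mem_iInter.1 hx (m + 1)))

end Cells

lemma subsingleton_iInter_cell {w : ℕ → ℝ} (hw : Tendsto w atTop (𝓝 0)) (σ : ℕ → Bool) :
    (⋂ k, cell w k σ).Subsingleton := by
  intro x hx y hy
  have hle : ∀ k, |x - y| ≤ w (k + 1) := fun k => by
    obtain ⟨hx₁, hx₂⟩ := mem_iInter.1 hx k
    obtain ⟨hy₁, hy₂⟩ := mem_iInter.1 hy k
    rw [abs_le]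
    constructor <;> linarith
  have := ge_of_tendsto' (hw.comp (tendsto_add_atTop_nat 1)) hle
  exact sub_eq_zero.1 (abs_nonpos_iff.1 this)

lemma tendsto_atTop_zero_of_le_half {u : ℕ → ℝ} (h0 : ∀ k, 0 ≤ u (k + 1))
    (hhalf : ∀ k, u (k + 2) ≤ u (k + 1) / 2) : Tendsto u atTop (𝓝 0) := by
  have hb : ∀ k, u (k + 1) ≤ u 1 * (1 / 2) ^ k := fun k => by
    induction k with
    | zero => simp
    | succ k ih => rw [pow_succ]; linarith [hhalf k]
  have hgeom : Tendsto (fun k => u 1 * (1 / 2 : ℝ) ^ k) atTop (𝓝 0) := by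
    simpa using (tendsto_pow_atTop_nhds_zero_of_lt_one (by norm_num : (0 : ℝ) ≤ 1 / 2)
      (by norm_num)).const_mul (u 1)
  rw [← tendsto_add_atTop_iff_nat 1]
  exact tendsto_of_tendsto_of_tendsto_of_le_of_le tendsto_const_nhds hgeom h0 hb

lemma pos_succ_of_rec {ε w : ℕ → ℝ} (hw1 : 0 < w 1)
    (hrec : ∀ k, w (k + 2) = w (k + 1) / 2 - ε (k + 1))
    (hεpos : ∀ k, 1 ≤ k → 0 < ε (k + 1))
    (hεw : ∀ k, 1 ≤ k → ε (k + 1) < w k / 4 - ε k / 2) : ∀ k, 0 < w (k + 1)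
  | 0 => hw1
  | k + 1 => by linarith [hrec k, hεw (k + 1) k.succ_pos, hεpos (k + 1) k.succ_pos]

section Construction

variable {ε w : ℕ → ℝ} {I : ℕ → Set (ℝ × ℝ)} {f : ℕ → ℝ → ℝ}
  (hrec : ∀ k, w (k + 2) = w (k + 1) / 2 - ε (k + 1))

include hrec in
lemma I_succ_eq_range (hw1 : w 1 = 1) (hI1 : I 1 = {((0 : ℝ), (1 : ℝ))})
    (hIrec : ∀ k, 1 ≤ k → I (k + 1) =
      ⋃ p ∈ I k, {(p.1, (p.1 + p.2) / 2 - ε k), ((p.1 + p.2) / 2 + ε k, p.2)}) (k : ℕ) :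
    I (k + 1) = range fun σ => (leftEnd w k σ, leftEnd w k σ + w (k + 1)) := by
  induction k with
  | zero => simp [hI1, hw1]
  | succ k ih =>
    rw [hIrec (k + 1) k.succ_pos, ih, biUnion_range]
    ext q
    simp only [mem_iUnion, mem_insert_iff, mem_singleton_iff, mem_range]
    constructor
    · rintro ⟨σ, rfl | rfl⟩
      · refine ⟨update σ k false, Prod.ext ?_ ?_⟩ <;> simp [leftEnd_succ, leftEnd_update, hrec]
        ring
      · refine ⟨update σ k true, Prod.ext ?_ ?_⟩ <;> simp [leftEnd_succ, leftEnd_update, hrec] <;>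
          ring
    · rintro ⟨σ, rfl⟩
      refine ⟨σ, ?_⟩
      cases h : σ k
      · refine Or.inl (Prod.ext ?_ ?_) <;> simp [leftEnd_succ, h, hrec]
        ring
      · refine Or.inr (Prod.ext ?_ ?_) <;> simp [leftEnd_succ, h, hrec] <;> ring

variable (hI : ∀ k σ, (leftEnd w k σ, leftEnd w k σ + w (k + 1)) ∈ I (k + 1))
  (hfleft : ∀ k, 1 ≤ k → ∀ p ∈ I k, ∀ x : ℝ, p.1 ≤ x → x ≤ (p.1 + p.2) / 2 - ε k →
    f k x = w (k + 2) / w (k + 1) * (x - p.1) + f (k - 1) p.1)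
  (hfright : ∀ k, 1 ≤ k → ∀ p ∈ I k, ∀ x : ℝ, (p.1 + p.2) / 2 + ε k ≤ x → x ≤ p.2 →
    f k x = w (k + 2) / w (k + 1) * (x - (p.1 + p.2) / 2 - ε k) + f (k - 1) p.1
      + w (k + 2) + 2 * ε (k + 1))
include hrec hI hfleft hfright

lemma f_succ_eq_of_mem_cell {k : ℕ} {σ : ℕ → Bool} {x : ℝ} (hx : x ∈ cell w (k + 1) σ) :
    f (k + 1) x = f k (leftEnd w k σ) + (bif σ k then w (k + 2) - w (k + 3) else 0)
      + w (k + 3) / w (k + 2) * (x - leftEnd w (k + 1) σ) := by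
  obtain ⟨h₁, h₂⟩ := hx
  rw [leftEnd_succ] at h₁ h₂ ⊢
  have hk := hrec k
  have hk' : w (k + 3) = w (k + 2) / 2 - ε (k + 2) := hrec (k + 1)
  cases h : σ k <;> simp only [h, cond_true, cond_false, add_zero] at h₁ h₂ ⊢
  · rw [hfleft (k + 1) k.succ_pos _ (hI k σ) x h₁ (by dsimp only; linarith)]
    simp only [Nat.add_sub_cancel]
    ring
  · rw [hfright (k + 1) k.succ_pos _ (hI k σ) x (by dsimp only; linarith) (by dsimp only; linarith)]
    simp only [Nat.add_sub_cancel]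
    linear_combination -(w (k + 3) / w (k + 2)) * hk + 2 * hk'

lemma f_leftEnd (hf0 : ∀ x, f 0 x = x / 3) (h0 : ∀ k, 0 ≤ w (k + 1)) :
    ∀ k σ, f k (leftEnd w k σ) = leftEnd w (k + 1) (seqCons false σ)
  | 0, σ => by simp [hf0, leftEnd_succ]
  | k + 1, σ => by
    have hx : leftEnd w (k + 1) σ ∈ cell w (k + 1) σ := left_mem_Icc.2 (by linarith [h0 (k + 1)])
    rw [f_succ_eq_of_mem_cell hrec hI hfleft hfright hx,
      f_leftEnd hf0 h0 k σ, leftEnd_succ (k + 1) (seqCons false σ), seqCons_succ]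
    ring

lemma mapsTo_f_cell (hf0 : ∀ x, f 0 x = x / 3) (hpos : ∀ k, 0 < w (k + 1)) (k : ℕ)
    (σ : ℕ → Bool) : MapsTo (f (k + 1)) (cell w (k + 1) σ) (cell w (k + 2) (seqCons false σ)) := by
  intro x hx
  have hr0 : 0 ≤ w (k + 3) / w (k + 2) := div_nonneg (hpos (k + 2)).le (hpos (k + 1)).le
  have hr : w (k + 3) / w (k + 2) * w (k + 2) = w (k + 3) := div_mul_cancel₀ _ (hpos (k + 1)).ne'
  have h₁ : 0 ≤ x - leftEnd w (k + 1) σ := sub_nonneg.2 hx.1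
  have h₂ : x - leftEnd w (k + 1) σ ≤ w (k + 2) := by linarith [hx.2]
  have := mul_le_mul_of_nonneg_left h₂ hr0
  have := mul_nonneg hr0 h₁
  rw [f_succ_eq_of_mem_cell hrec hI hfleft hfright hx,
    f_leftEnd hrec hI hfleft hfright hf0 (fun k => (hpos k).le),
    cell, leftEnd_succ (k + 1) (seqCons false σ), seqCons_succ]
  constructor <;> linarith

end Construction

end BinaryCells

open BinaryCells

theorem stmt_19_general
    (ε w : ℕ → ℝ)
    (hw1 : w 1 = 1) (hε1 : ε 1 = 1 / 6)
    (hwrec : ∀ k, 1 ≤ k → w (k + 1) = w k / 2 - ε k)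
    (hεpos : ∀ k, 1 ≤ k → 0 < ε (k + 1))
    (hεw : ∀ k, 1 ≤ k → ε (k + 1) < w k / 4 - ε k / 2)
    (I : ℕ → Set (ℝ × ℝ))
    (hI1 : I 1 = {((0 : ℝ), (1 : ℝ))})
    (hIrec : ∀ k, 1 ≤ k → I (k + 1) =
      ⋃ p ∈ I k, {(p.1, (p.1 + p.2) / 2 - ε k), ((p.1 + p.2) / 2 + ε k, p.2)})
    (A : ℕ → Set ℝ)
    (hA : ∀ k, A k = ⋃ p ∈ I k, Set.Icc p.1 p.2)
    (Astar : Set ℝ)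
    (hAstar : Astar = ⋂ k, A (k + 1))
    (f : ℕ → ℝ → ℝ)
    (hf0 : ∀ x, f 0 x = x / 3)
    (hfleft : ∀ k, 1 ≤ k → ∀ p ∈ I k, ∀ x : ℝ, p.1 ≤ x → x ≤ (p.1 + p.2) / 2 - ε k →
      f k x = w (k + 2) / w (k + 1) * (x - p.1) + f (k - 1) p.1)
    (hfright : ∀ k, 1 ≤ k → ∀ p ∈ I k, ∀ x : ℝ, (p.1 + p.2) / 2 + ε k ≤ x → x ≤ p.2 →
      f k x = w (k + 2) / w (k + 1) * (x - (p.1 + p.2) / 2 - ε k) + f (k - 1) p.1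
        + w (k + 2) + 2 * ε (k + 1))
    (F : ℝ → ℝ)
    (hFlim : ∀ x ∈ Set.Icc (0 : ℝ) 1, Filter.Tendsto (fun k => f k x) Filter.atTop (nhds (F x)))
    (g : ℝ → ℝ) (hg : ∀ x, g x = F x + 2 / 3)
    :
    Astar.Nonempty ∧ IsCompact Astar ∧ Astar = F '' Astar ∪ g '' Astar := by
  have hrec : ∀ k, w (k + 2) = w (k + 1) / 2 - ε (k + 1) := fun k => hwrec (k + 1) k.succ_pos
  have hε : ∀ k, 0 < ε (k + 1)
    | 0 => by norm_num [hε1]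
    | k + 1 => hεpos (k + 1) k.succ_pos
  have hpos := pos_succ_of_rec (hw1 ▸ one_pos) hrec hεpos hεw
  have h0 : ∀ k, 0 ≤ w (k + 1) := fun k => (hpos k).le
  have hhalf : ∀ k, w (k + 2) ≤ w (k + 1) / 2 := fun k => by linarith [hrec k, hε k]
  have hmono : ∀ k, w (k + 2) ≤ w (k + 1) := fun k => by linarith [hhalf k, hpos k]
  have hI := I_succ_eq_range hrec hw1 hI1 hIrec
  have hAstar' : Astar = ⋃ σ, ⋂ k, cell w k σ := by
    rw [hAstar, ← iInter_iUnion_cell h0 hmono]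
    simp only [hA, hI, biUnion_range, cell]
  have hF := mapsTo_lim_iInter_cell h0 hmono hw1 hFlim
    (mapsTo_f_cell hrec (fun k σ => hI k ▸ mem_range_self σ) hfleft hfright hf0 hpos)
  have hg' : g = (· + (w 1 - w 2)) ∘ F := funext fun x => by
    rw [hg, comp_apply, hrec 0, hw1, hε1]
    norm_num
  rw [hAstar']
  refine ⟨(nonempty_iInter_cell h0 hmono fun _ => false).mono (subset_iUnion _ _),
    isCompact_iUnion_iInter_cell h0 hmono, ?_⟩
  exact iUnion_eq_image_union_image (nonempty_iInter_cell h0 hmono)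
    (subsingleton_iInter_cell (tendsto_atTop_zero_of_le_half h0 hhalf)) hF
    fun σ => hg' ▸ (mapsTo_add_iInter_cell_seqCons h0 hmono σ).comp (hF σ)

theorem stmt_19
    (ε w : ℕ → ℝ)
    (hw1 : w 1 = 1) (hε1 : ε 1 = 1 / 6)
    (hwrec : ∀ k, 1 ≤ k → w (k + 1) = w k / 2 - ε k)
    (hεpos : ∀ k, 1 ≤ k → 0 < ε (k + 1))
    (hεgeom : ∀ k, 1 ≤ k → 2 ^ k * ε (k + 1) < 1 / 2 * (1 / 4 ^ k))
    (hεquot : ∀ k, 1 ≤ k → ε (k + 1) / ε k < 1 / 2)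
    (hεw : ∀ k, 1 ≤ k → ε (k + 1) < w k / 4 - ε k / 2)
    (I : ℕ → Set (ℝ × ℝ))
    (hI1 : I 1 = {((0 : ℝ), (1 : ℝ))})
    (hIrec : ∀ k, 1 ≤ k → I (k + 1) =
      ⋃ p ∈ I k, {(p.1, (p.1 + p.2) / 2 - ε k), ((p.1 + p.2) / 2 + ε k, p.2)})
    (A : ℕ → Set ℝ)
    (hA : ∀ k, A k = ⋃ p ∈ I k, Set.Icc p.1 p.2)
    (Astar : Set ℝ)
    (hAstar : Astar = ⋂ k, A (k + 1))
    (f : ℕ → ℝ → ℝ)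
    (hf0 : ∀ x, f 0 x = x / 3)
    (hfmaps : ∀ k, Set.MapsTo (f k) (Set.Icc (0 : ℝ) 1) (Set.Icc (0 : ℝ) 1))
    (hfleft : ∀ k, 1 ≤ k → ∀ p ∈ I k, ∀ x : ℝ, p.1 ≤ x → x ≤ (p.1 + p.2) / 2 - ε k →
      f k x = w (k + 2) / w (k + 1) * (x - p.1) + f (k - 1) p.1)
    (hfmid : ∀ k, 1 ≤ k → ∀ p ∈ I k, ∀ x : ℝ, |x - (p.1 + p.2) / 2| < ε k →
      f k x = ε (k + 1) / ε k * (x - (p.1 + p.2) / 2 + ε k) + f (k - 1) p.1 + w (k + 2))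
    (hfright : ∀ k, 1 ≤ k → ∀ p ∈ I k, ∀ x : ℝ, (p.1 + p.2) / 2 + ε k ≤ x → x ≤ p.2 →
      f k x = w (k + 2) / w (k + 1) * (x - (p.1 + p.2) / 2 - ε k) + f (k - 1) p.1
        + w (k + 2) + 2 * ε (k + 1))
    (hfout : ∀ k, 1 ≤ k → ∀ x ∈ Set.Icc (0 : ℝ) 1 \ (⋃ p ∈ I k, Set.Icc p.1 p.2),
      f k x = f (k - 1) x)
    (F : ℝ → ℝ)
    (hFlim : ∀ x ∈ Set.Icc (0 : ℝ) 1, Filter.Tendsto (fun k => f k x) Filter.atTop (nhds (F x)))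
    (g : ℝ → ℝ) (hg : ∀ x, g x = F x + 2 / 3)
    :
    Astar.Nonempty ∧ IsCompact Astar ∧ Astar = F '' Astar ∪ g '' Astar :=
  stmt_19_general ε w hw1 hε1 hwrec hεpos hεw I hI1 hIrec A hA Astar hAstar f hf0 hfleft hfright F
    hFlim g hg
end
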